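/- arXiv:2505.15829 — 2 statements merged into one kernel-verified Lean document; each statement's English description precedes it below -/
import Mathlib

section
/- For a compact convex set Ξ, point ξ_j, constant Ψ, and λ ≥ 0: max over ξ ∈ Ξ of (Ψ − λ‖ξ − ξ_j‖) = min over n with ‖n‖_* ≤ λ of max over ξ ∈ Ξ of (Ψ − ⟨ξ − ξ_j, n⟩). -/
open RealInnerProductSpace

/-- The dual norm of a norm `N` on `ℝ^d`: `‖n‖_* = sup {⟨x, n⟩ : N x ≤ 1}`. -/
noncomputable def dualNorm {d : ℕ} (N : EuclideanSpace ℝ (Fin d) → ℝ)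
    (n : EuclideanSpace ℝ (Fin d)) : ℝ :=
  sSup {y : ℝ | ∃ x : EuclideanSpace ℝ (Fin d), N x ≤ 1 ∧ y = ⟪x, n⟫}

variable {d : ℕ}

local notation "E" => EuclideanSpace ℝ (Fin d)

section Aux
variable (N : EuclideanSpace ℝ (Fin d) → ℝ)
    (hN_nonneg : ∀ x, 0 ≤ N x)
    (hN_zero : ∀ x, N x = 0 ↔ x = 0)
    (hN_homog : ∀ (c : ℝ) (x), N (c • x) = |c| * N x)
    (hN_tri : ∀ x y, N (x + y) ≤ N x + N y)

include hN_zero in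
lemma N_zero' : N 0 = 0 := (hN_zero 0).2 rfl

include hN_nonneg hN_zero hN_homog hN_tri in
lemma N_upper : ∃ C : ℝ, 0 ≤ C ∧ ∀ x : E, N x ≤ C * ‖x‖ := by
  classical
  refine ⟨∑ i : Fin d, N (EuclideanSpace.single i 1), ?_, ?_⟩
  · exact Finset.sum_nonneg fun i _ => hN_nonneg _
  · intro x
    have hx : ∑ i : Fin d, x i • EuclideanSpace.single i (1:ℝ) = x := by
      have := (EuclideanSpace.basisFun (Fin d) ℝ).sum_repr x
      simpa [EuclideanSpace.basisFun_apply, EuclideanSpace.basisFun_repr] using this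
    calc N x = N (∑ i : Fin d, x i • EuclideanSpace.single i (1:ℝ)) := by rw [hx]
      _ ≤ ∑ i : Fin d, N (x i • EuclideanSpace.single i (1:ℝ)) :=
          Finset.le_sum_of_subadditive N (N_zero' N hN_zero).le hN_tri _ _
      _ ≤ ∑ i : Fin d, ‖x‖ * N (EuclideanSpace.single i (1:ℝ)) := by
          refine Finset.sum_le_sum fun i _ => ?_
          rw [hN_homog]
          have h1 : |x i| ≤ ‖x‖ := by
            rw [EuclideanSpace.norm_eq]
            have h2 : |x i| = Real.sqrt (‖x i‖ ^ 2) := by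
              rw [Real.sqrt_sq_eq_abs]; simp
            rw [h2]
            apply Real.sqrt_le_sqrt
            exact Finset.single_le_sum (f := fun i => ‖x i‖ ^ 2)
              (fun i _ => sq_nonneg _) (Finset.mem_univ i)
          exact mul_le_mul_of_nonneg_right h1 (hN_nonneg _)
      _ = (∑ i : Fin d, N (EuclideanSpace.single i 1)) * ‖x‖ := by
          rw [Finset.sum_mul]; exact Finset.sum_congr rfl fun i _ => mul_comm _ _
end Aux

section Aux2
variable (N : EuclideanSpace ℝ (Fin d) → ℝ)
    (hN_nonneg : ∀ x, 0 ≤ N x)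
    (hN_zero : ∀ x, N x = 0 ↔ x = 0)
    (hN_homog : ∀ (c : ℝ) (x), N (c • x) = |c| * N x)
    (hN_tri : ∀ x y, N (x + y) ≤ N x + N y)

include hN_nonneg hN_zero hN_homog hN_tri in
lemma N_cont : Continuous N := by
  obtain ⟨C, hC0, hC⟩ := N_upper N hN_nonneg hN_zero hN_homog hN_tri
  have key : ∀ x y : E, N x - N y ≤ C * ‖x - y‖ := by
    intro x y
    have := hN_tri (x - y) y
    simp only [sub_add_cancel] at this
    linarith [hC (x - y)]
  rw [Metric.continuous_iff]
  intro x ε hε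
  refine ⟨ε / (C + 1), by positivity, fun y hy => ?_⟩
  rw [Real.dist_eq, abs_sub_lt_iff]
  have h1 := key y x
  have h2 := key x y
  have h3 : ‖y - x‖ < ε / (C + 1) := by rwa [dist_eq_norm] at hy
  have h4 : ‖x - y‖ < ε / (C + 1) := by rwa [norm_sub_rev]
  have h5 : C * (ε / (C + 1)) < ε := by
    rw [mul_div_assoc'] at *
    rw [div_lt_iff₀ (by positivity)]
    nlinarith
  constructor
  · nlinarith [mul_le_mul_of_nonneg_left h3.le hC0]
  · nlinarith [mul_le_mul_of_nonneg_left h4.le hC0]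

include hN_nonneg hN_zero hN_homog hN_tri in
lemma N_lower : ∃ c : ℝ, 0 < c ∧ ∀ x : E, c * ‖x‖ ≤ N x := by
  by_cases hd : ∀ x : E, x = 0
  · exact ⟨1, one_pos, fun x => by simp [hd x, N_zero' N hN_zero]⟩
  push_neg at hd
  obtain ⟨x0, hx0⟩ := hd
  have hsne : (Metric.sphere (0:E) 1).Nonempty :=
    ⟨‖x0‖⁻¹ • x0, by simp [norm_smul, norm_ne_zero_iff.2 hx0]⟩
  have hsc : IsCompact (Metric.sphere (0:E) 1) := isCompact_sphere 0 1
  obtain ⟨z, hz, hzmin⟩ := hsc.exists_isMinOn hsne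
    ((N_cont N hN_nonneg hN_zero hN_homog hN_tri).continuousOn)
  have hz1 : ‖z‖ = 1 := by simpa using hz
  have hzne : z ≠ 0 := by intro h; rw [h] at hz1; simp at hz1
  have hc : 0 < N z := lt_of_le_of_ne (hN_nonneg z) (fun h => hzne ((hN_zero z).1 h.symm))
  refine ⟨N z, hc, fun x => ?_⟩
  rcases eq_or_ne x 0 with rfl | hx
  · simp [N_zero' N hN_zero]
  have hxn : (0:ℝ) < ‖x‖ := norm_pos_iff.2 hx
  have hmem : ‖x‖⁻¹ • x ∈ Metric.sphere (0:E) 1 := by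
    simp [norm_smul, abs_of_pos (inv_pos.2 hxn), inv_mul_cancel₀ hxn.ne']
  have := hzmin hmem
  have h2 : N (‖x‖⁻¹ • x) = ‖x‖⁻¹ * N x := by
    rw [hN_homog, abs_of_pos (inv_pos.2 hxn)]
  simp only [IsMinOn, IsMinFilter] at hzmin
  have h3 : N z ≤ ‖x‖⁻¹ * N x := h2 ▸ this
  calc N z * ‖x‖ ≤ (‖x‖⁻¹ * N x) * ‖x‖ := by nlinarith
    _ = N x := by field_simp
end Aux2

section Aux3
variable (N : EuclideanSpace ℝ (Fin d) → ℝ)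
    (hN_nonneg : ∀ x, 0 ≤ N x)
    (hN_zero : ∀ x, N x = 0 ↔ x = 0)
    (hN_homog : ∀ (c : ℝ) (x), N (c • x) = |c| * N x)
    (hN_tri : ∀ x y, N (x + y) ≤ N x + N y)

include hN_nonneg hN_zero hN_homog hN_tri in
lemma dualSet_bdd (n : E) :
    BddAbove {y : ℝ | ∃ x : E, N x ≤ 1 ∧ y = ⟪x, n⟫} := by
  obtain ⟨c, hc0, hc⟩ := N_lower N hN_nonneg hN_zero hN_homog hN_tri
  refine ⟨c⁻¹ * ‖n‖, fun y hy => ?_⟩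
  obtain ⟨x, hx1, rfl⟩ := hy
  have hxle : ‖x‖ ≤ c⁻¹ := by
    rw [inv_eq_one_div, le_div_iff₀ hc0]; nlinarith [hc x, norm_nonneg x]
  calc ⟪x, n⟫ ≤ ‖x‖ * ‖n‖ := real_inner_le_norm x n
    _ ≤ c⁻¹ * ‖n‖ := mul_le_mul_of_nonneg_right hxle (norm_nonneg n)

include hN_nonneg hN_zero hN_homog hN_tri in
lemma mem_le_dualNorm (n : E) (x : E) (hx : N x ≤ 1) :
    ⟪x, n⟫ ≤ dualNorm N n :=
  le_csSup (dualSet_bdd N hN_nonneg hN_zero hN_homog hN_tri n) ⟨x, hx, rfl⟩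

include hN_nonneg hN_zero hN_homog hN_tri in
lemma inner_le_N_mul_dual (n : E) (v : E) :
    ⟪v, n⟫ ≤ N v * dualNorm N n := by
  rcases eq_or_ne v 0 with rfl | hv
  · simp [N_zero' N hN_zero]
  have ht : 0 < N v := lt_of_le_of_ne (hN_nonneg v) fun h => hv ((hN_zero v).1 h.symm)
  have hx : N ((N v)⁻¹ • v) ≤ 1 := by
    rw [hN_homog, abs_of_pos (inv_pos.2 ht), inv_mul_cancel₀ ht.ne']
  have h := mem_le_dualNorm N hN_nonneg hN_zero hN_homog hN_tri n _ hx
  rw [real_inner_smul_left] at h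
  calc ⟪v, n⟫ = N v * ((N v)⁻¹ * ⟪v, n⟫) := by field_simp
    _ ≤ N v * dualNorm N n := mul_le_mul_of_nonneg_left h ht.le

include hN_zero in
lemma dualNorm_nonneg' (n : E) : 0 ≤ dualNorm N n :=
  Real.sSup_nonneg' ⟨0, ⟨0, by simp [N_zero' N hN_zero], by simp⟩, le_refl 0⟩
end Aux3

set_option maxHeartbeats 2000000 in
/-- `max_{ξ∈Ξ} (Ψ − λ‖ξ − ξⱼ‖) = min_{‖n‖_* ≤ λ} max_{ξ∈Ξ} (Ψ − ⟨ξ − ξⱼ, n⟩)`. -/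
theorem max_penalized_eq_min_max {d : ℕ} (N : EuclideanSpace ℝ (Fin d) → ℝ)
    (hN_nonneg : ∀ x, 0 ≤ N x)
    (hN_zero : ∀ x, N x = 0 ↔ x = 0)
    (hN_homog : ∀ (c : ℝ) (x), N (c • x) = |c| * N x)
    (hN_tri : ∀ x y, N (x + y) ≤ N x + N y)
    (Ξ : Set (EuclideanSpace ℝ (Fin d))) (hΞne : Ξ.Nonempty) (hΞc : IsCompact Ξ)
    (hΞconv : Convex ℝ Ξ)
    (ξj : EuclideanSpace ℝ (Fin d)) (Ψ : ℝ) (lam : ℝ) (hlam : 0 ≤ lam) :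
    sSup {y : ℝ | ∃ ξ ∈ Ξ, y = Ψ - lam * N (ξ - ξj)} =
    sInf {y : ℝ | ∃ n : EuclideanSpace ℝ (Fin d), dualNorm N n ≤ lam ∧
        y = sSup {z : ℝ | ∃ ξ ∈ Ξ, z = Ψ - ⟪ξ - ξj, n⟫}} := by
  have hNcont := N_cont N hN_nonneg hN_zero hN_homog hN_tri
  set T : Set ℝ := {y : ℝ | ∃ ξ ∈ Ξ, y = Ψ - lam * N (ξ - ξj)} with hT
  set S : EuclideanSpace ℝ (Fin d) → Set ℝ :=
    fun n => {z : ℝ | ∃ ξ ∈ Ξ, z = Ψ - ⟪ξ - ξj, n⟫} with hS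
  set R : Set ℝ := {y : ℝ | ∃ n : EuclideanSpace ℝ (Fin d), dualNorm N n ≤ lam ∧
      y = sSup (S n)} with hR
  -- basic set facts
  have hTim : T = (fun ξ => Ψ - lam * N (ξ - ξj)) '' Ξ := by
    ext y; simp [hT, eq_comm]
  have hSim : ∀ n, S n = (fun ξ => Ψ - ⟪ξ - ξj, n⟫) '' Ξ := by
    intro n; ext y; simp [hS, eq_comm]
  have hTne : T.Nonempty := by
    obtain ⟨ξ, hξ⟩ := hΞne; exact ⟨_, ξ, hξ, rfl⟩
  have hTbdd : BddAbove T := by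
    rw [hTim]
    exact (hΞc.image (by continuity)).bddAbove
  have hSne : ∀ n, (S n).Nonempty := by
    intro n; obtain ⟨ξ, hξ⟩ := hΞne; exact ⟨_, ξ, hξ, rfl⟩
  have hSbdd : ∀ n, BddAbove (S n) := by
    intro n; rw [hSim]
    refine (hΞc.image ?_).bddAbove
    exact Continuous.sub continuous_const (Continuous.inner (by continuity) continuous_const)
  -- weak duality
  have weak : ∀ y ∈ R, sSup T ≤ y := by
    rintro y ⟨n, hdn, rfl⟩
    refine csSup_le hTne ?_
    rintro t ⟨ξ, hξ, rfl⟩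
    have h1 : ⟪ξ - ξj, n⟫ ≤ lam * N (ξ - ξj) := by
      have h2 := inner_le_N_mul_dual N hN_nonneg hN_zero hN_homog hN_tri n (ξ - ξj)
      have h3 : N (ξ - ξj) * dualNorm N n ≤ N (ξ - ξj) * lam :=
        mul_le_mul_of_nonneg_left hdn (hN_nonneg _)
      linarith [mul_comm (N (ξ - ξj)) lam ▸ h3]
    have : Ψ - lam * N (ξ - ξj) ≤ Ψ - ⟪ξ - ξj, n⟫ := by linarith
    exact this.trans (le_csSup (hSbdd n) ⟨ξ, hξ, rfl⟩)
  have hRne : R.Nonempty := by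
    refine ⟨sSup (S 0), 0, ?_, rfl⟩
    have : {y : ℝ | ∃ x : EuclideanSpace ℝ (Fin d), N x ≤ 1 ∧ y = ⟪x, (0:EuclideanSpace ℝ (Fin d))⟫} = {0} := by
      ext y
      constructor
      · rintro ⟨x, _, rfl⟩; simp
      · rintro rfl; exact ⟨0, by simp [N_zero' N hN_zero]⟩
    rw [dualNorm, this, csSup_singleton]
    exact hlam
  -- m = inf of penalties
  set M : Set ℝ := {z : ℝ | ∃ ξ ∈ Ξ, z = lam * N (ξ - ξj)} with hM
  have hMne : M.Nonempty := by
    obtain ⟨ξ, hξ⟩ := hΞne; exact ⟨_, ξ, hξ, rfl⟩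
  have hMbdd : BddBelow M := by
    refine ⟨0, ?_⟩; rintro z ⟨ξ, hξ, rfl⟩
    exact mul_nonneg hlam (hN_nonneg _)
  obtain ⟨m, hm⟩ : ∃ m : ℝ, m = sInf M := ⟨_, rfl⟩
  have hm0 : 0 ≤ m := hm ▸ le_csInf hMne fun z ⟨ξ, hξ, hz⟩ => hz ▸ mul_nonneg hlam (hN_nonneg _)
  have hsupT : sSup T = Ψ - m := by
    apply le_antisymm
    · refine csSup_le hTne ?_
      rintro t ⟨ξ, hξ, rfl⟩
      have : m ≤ lam * N (ξ - ξj) := hm ▸ csInf_le hMbdd ⟨ξ, hξ, rfl⟩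
      linarith
    · have : Ψ - sSup T ≤ m := by
        rw [hm]
        refine le_csInf hMne ?_
        rintro z ⟨ξ, hξ, rfl⟩
        have : Ψ - lam * N (ξ - ξj) ≤ sSup T := le_csSup hTbdd ⟨ξ, hξ, rfl⟩
        linarith
      linarith
  -- find n* with dual norm ≤ lam and sSup (S n*) ≤ sSup T
  have strong : ∃ nst : EuclideanSpace ℝ (Fin d), dualNorm N nst ≤ lam ∧ sSup (S nst) ≤ sSup T := by
    rcases eq_or_lt_of_le hm0 with hm0' | hmpos
    · -- m = 0 : take n = 0
      refine ⟨0, ?_, ?_⟩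
      · have : {y : ℝ | ∃ x : EuclideanSpace ℝ (Fin d), N x ≤ 1 ∧ y = ⟪x, (0:EuclideanSpace ℝ (Fin d))⟫} = {0} := by
          ext y
          constructor
          · rintro ⟨x, _, rfl⟩; simp
          · rintro rfl; exact ⟨0, by simp [N_zero' N hN_zero]⟩
        rw [dualNorm, this, csSup_singleton]; exact hlam
      · refine csSup_le (hSne 0) ?_
        rintro z ⟨ξ, hξ, rfl⟩
        rw [hsupT, ← hm0']
        simp
    · -- m > 0 : separation
      have hlampos : 0 < lam := by
        obtain ⟨ξ, hξ⟩ := hΞne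
        have h1 : m ≤ lam * N (ξ - ξj) := hm ▸ csInf_le hMbdd ⟨ξ, hξ, rfl⟩
        rcases hlam.eq_or_lt with h | h
        · exfalso; rw [← h] at h1; simp at h1; linarith
        · exact h
      set B : Set (EuclideanSpace ℝ (Fin d)) := {v | lam * N v < m} with hB
      set C : Set (EuclideanSpace ℝ (Fin d)) := (fun ξ => ξ - ξj) '' Ξ with hC
      have hBopen : IsOpen B := by
        have : B = (fun v => lam * N v) ⁻¹' (Set.Iio m) := rfl
        rw [this]
        exact (continuous_const.mul hNcont).isOpen_preimage _ isOpen_Iio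
      have hBconv : Convex ℝ B := by
        rintro v hv w hw a b ha hb hab
        simp only [hB, Set.mem_setOf_eq] at *
        have h1 : N (a • v + b • w) ≤ a * N v + b * N w := by
          calc N (a • v + b • w) ≤ N (a • v) + N (b • w) := hN_tri _ _
            _ = a * N v + b * N w := by rw [hN_homog, hN_homog, abs_of_nonneg ha, abs_of_nonneg hb]
        have h2 : lam * (a * N v + b * N w) < m := by
          rcases eq_or_lt_of_le hb with hb' | hb'
          · have ha1 : a = 1 := by linarith
            rw [← hb', ha1]; simpa using hv
          · have e1 : lam * (a * N v) ≤ a * m := by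
              have := mul_le_mul_of_nonneg_left hv.le ha
              calc lam * (a * N v) = a * (lam * N v) := by ring
                _ ≤ a * m := this
            have e2 : lam * (b * N w) < b * m := by
              have := (mul_lt_mul_iff_right₀ hb').2 hw
              calc lam * (b * N w) = b * (lam * N w) := by ring
                _ < b * m := this
            calc lam * (a * N v + b * N w) = lam * (a * N v) + lam * (b * N w) := by ring
              _ < a * m + b * m := by linarith
              _ = m := by rw [← add_mul, hab, one_mul]
        calc lam * N (a • v + b • w) ≤ lam * (a * N v + b * N w) :=
              mul_le_mul_of_nonneg_left h1 hlam
          _ < m := h2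
      have hCconv : Convex ℝ C := by
        rintro _ ⟨ξ1, hξ1, rfl⟩ _ ⟨ξ2, hξ2, rfl⟩ a b ha hb hab
        refine ⟨a • ξ1 + b • ξ2, hΞconv hξ1 hξ2 ha hb hab, ?_⟩
        show a • ξ1 + b • ξ2 - ξj = a • (ξ1 - ξj) + b • (ξ2 - ξj)
        have hj : a • ξj + b • ξj = ξj := by rw [← add_smul, hab, one_smul]
        have h4 : a • (ξ1 - ξj) + b • (ξ2 - ξj) = a • ξ1 + b • ξ2 - (a • ξj + b • ξj) := by
          rw [smul_sub, smul_sub]; abel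
        rw [h4, hj]
      have hdisj : Disjoint B C := by
        rw [Set.disjoint_left]
        rintro v hv ⟨ξ, hξ, rfl⟩
        have : m ≤ lam * N (ξ - ξj) := hm ▸ csInf_le hMbdd ⟨ξ, hξ, rfl⟩
        simp only [hB, Set.mem_setOf_eq] at hv
        linarith
      obtain ⟨f, s, hfB, hfC⟩ := geometric_hahn_banach_open hBconv hBopen hCconv hdisj
      have h0B : (0 : EuclideanSpace ℝ (Fin d)) ∈ B := by
        simp [hB, N_zero' N hN_zero, hmpos]
      have hs0 : 0 < s := by have := hfB 0 h0B; simpa using this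
      -- key bound: for N x ≤ 1, (m/lam) * f x ≤ s
      have hkey : ∀ x : EuclideanSpace ℝ (Fin d), N x ≤ 1 → (m / lam) * f x ≤ s := by
        intro x hx
        by_contra hq
        push_neg at hq
        set q := (m / lam) * f x with hqdef
        have hqpos : 0 < q := hs0.trans hq
        set t := (s / q + 1) / 2 with ht
        have hsq0 : 0 < s / q := div_pos hs0 hqpos
        have ht0 : 0 < t := by rw [ht]; linarith
        have hsq : s / q < 1 := (div_lt_one hqpos).2 hq
        have ht1 : t < 1 := by rw [ht]; linarith
        have hmem : (t * (m / lam)) • x ∈ B := by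
          simp only [hB, Set.mem_setOf_eq]
          rw [hN_homog]
          have habs : |t * (m / lam)| = t * (m / lam) := abs_of_pos (mul_pos ht0 (div_pos hmpos hlampos))
          rw [habs]
          have hml : m / lam * lam = m := div_mul_cancel₀ m hlampos.ne'
          calc lam * (t * (m / lam) * N x) = t * (m / lam * lam) * N x := by ring
            _ = t * m * N x := by rw [hml]
            _ ≤ t * m * 1 := mul_le_mul_of_nonneg_left hx (mul_nonneg ht0.le hm0)
            _ < m := by rw [mul_one]; nlinarith
        have hlt := hfB _ hmem
        rw [map_smul, smul_eq_mul] at hlt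
        have hlt2 : t * q < s := by rw [hqdef]; nlinarith [hlt]
        have h2 : s < t * q := by
          have h3 : s / q < t := by rw [ht]; linarith
          calc s = (s / q) * q := (div_mul_cancel₀ s hqpos.ne').symm
            _ < t * q := mul_lt_mul_of_pos_right h3 hqpos
        linarith
      -- Riesz representation
      set n0 := (InnerProductSpace.toDual ℝ (EuclideanSpace ℝ (Fin d))).symm f with hn0
      have hn0app : ∀ x, ⟪x, n0⟫ = f x := by
        intro x
        rw [real_inner_comm, hn0, InnerProductSpace.toDual_symm_apply]
      refine ⟨(m / s) • n0, ?_, ?_⟩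
      · refine Real.sSup_le ?_ hlam
        rintro y ⟨x, hx, rfl⟩
        rw [real_inner_smul_right, hn0app]
        have := hkey x hx
        have hfx : f x ≤ s * lam / m := by
          rw [div_mul_eq_mul_div, div_le_iff₀ hlampos] at this
          rw [le_div_iff₀ hmpos]
          linarith
        calc m / s * f x ≤ m / s * (s * lam / m) :=
              mul_le_mul_of_nonneg_left hfx (div_nonneg hm0 hs0.le)
          _ = lam := by
              field_simp
      · refine csSup_le (hSne _) ?_
        rintro z ⟨ξ, hξ, rfl⟩
        rw [hsupT]
        have hfv : s ≤ f (ξ - ξj) := hfC _ ⟨ξ, hξ, rfl⟩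
        have : m ≤ ⟪ξ - ξj, (m / s) • n0⟫ := by
          rw [real_inner_smul_right, hn0app]
          calc m = (m / s) * s := (div_mul_cancel₀ m hs0.ne').symm
            _ ≤ (m / s) * f (ξ - ξj) := by
                apply mul_le_mul_of_nonneg_left hfv (by positivity)
        linarith
  obtain ⟨nst, hnst1, hnst2⟩ := strong
  apply le_antisymm
  · exact le_csInf hRne weak
  · have h1 : sInf R ≤ sSup (S nst) := csInf_le ⟨sSup T, weak⟩ ⟨nst, hnst1, rfl⟩
    exact h1.trans hnst2
end

section
/- Strong duality for the inner Wasserstein DRO problem on a finite sample space: given cost values Ψ_1,…,Ψ_K ∈ ℝ, distances c_{k,j} = ‖ξ_k − ξ_j‖ ≥ 0, a reference distribution (p_1^0,…,p_K^0) (nonnegative, summing to 1), and θ ≥ 0, the maximum of ∑_{k,j} π_{k,j} Ψ_k over matrices π ≥ 0 satisfying ∑_k π_{k,j} = p_j^0 for all j and ∑_{k,j} c_{k,j} π_{k,j} ≤ θ, equals the minimum of λθ + ∑_j p_j^0 h_j over λ ≥ 0 and h ∈ ℝ^K subject to h_j ≥ Ψ_k − λ c_{k,j} for all j, k. -/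
open Finset

section Aux

variable {K : ℕ} (Ψ : Fin K → ℝ) (c : Fin K → Fin K → ℝ) (p0 : Fin K → ℝ)

/-- The primal feasible value set with budget `t`. -/
def primalSet (t : ℝ) : Set ℝ :=
  {v : ℝ | ∃ π : Fin K → Fin K → ℝ,
      (∀ k j, 0 ≤ π k j) ∧
      (∀ j, ∑ k, π k j = p0 j) ∧
      (∑ k, ∑ j, c k j * π k j ≤ t) ∧
      v = ∑ k, ∑ j, π k j * Ψ k}

variable (hK : 0 < K) (hc : ∀ k j, 0 ≤ c k j) (hcdiag : ∀ k, c k k = 0)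
  (hp0 : ∀ j, 0 ≤ p0 j) (hp0sum : ∑ j, p0 j = 1)

include hp0 in
/-- Selection plans: assigning all mass of column `j` to row `σ j`. -/
lemma selection_mem (σ : Fin K → Fin K) {t : ℝ} (ht : ∑ j, p0 j * c (σ j) j ≤ t) :
    (∑ j, p0 j * Ψ (σ j)) ∈ primalSet Ψ c p0 t := by
  refine ⟨fun k j => if k = σ j then p0 j else 0, fun k j => ?_, fun j => ?_, ?_, ?_⟩
  · dsimp only; split <;> simp [hp0 j]
  · simp
  · calc ∑ k, ∑ j, c k j * ((fun k j => if k = σ j then p0 j else 0) k j)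
        = ∑ j, ∑ k, c k j * (if k = σ j then p0 j else 0) := Finset.sum_comm
      _ = ∑ j, p0 j * c (σ j) j := by
          congr 1; funext j
          simp [mul_ite, Finset.sum_ite_eq', mul_comm]
      _ ≤ t := ht
  · calc ∑ j, p0 j * Ψ (σ j)
        = ∑ j, ∑ k, (if k = σ j then p0 j else 0) * Ψ k := by
          congr 1; funext j
          simp [ite_mul, Finset.sum_ite_eq', mul_comm]
      _ = ∑ k, ∑ j, ((fun k j => if k = σ j then p0 j else 0) k j) * Ψ k := Finset.sum_comm

include hcdiag hp0 in
lemma primal_nonempty {t : ℝ} (ht : 0 ≤ t) : (primalSet Ψ c p0 t).Nonempty := by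
  refine ⟨_, selection_mem Ψ c p0 hp0 id ?_⟩
  simp only [id]
  calc ∑ j, p0 j * c j j = 0 := by simp [hcdiag]
    _ ≤ t := ht

include hK hp0sum in
omit hp0 in
lemma primal_bddAbove (t : ℝ) : BddAbove (primalSet Ψ c p0 t) := by
  have : Nonempty (Fin K) := ⟨⟨0, hK⟩⟩
  have hne : (Finset.univ : Finset (Fin K)).Nonempty := Finset.univ_nonempty
  refine ⟨Finset.univ.sup' hne Ψ, fun v hv => ?_⟩
  obtain ⟨π, hpos, hcol, hcost, hval⟩ := hv
  calc v = ∑ k, ∑ j, π k j * Ψ k := hval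
    _ ≤ ∑ k, ∑ j, π k j * Finset.univ.sup' hne Ψ := by
        refine Finset.sum_le_sum fun k _ => Finset.sum_le_sum fun j _ => ?_
        exact mul_le_mul_of_nonneg_left (Finset.le_sup' Ψ (Finset.mem_univ k)) (hpos k j)
    _ = (∑ k, ∑ j, π k j) * Finset.univ.sup' hne Ψ := by
        rw [Finset.sum_mul]; congr 1; funext k; rw [Finset.sum_mul]
    _ = Finset.univ.sup' hne Ψ := by
        rw [Finset.sum_comm]
        have : ∑ j, ∑ k, π k j = 1 := by
          rw [← hp0sum]; exact Finset.sum_congr rfl fun j _ => hcol j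
        rw [this, one_mul]

include hK hcdiag hp0 hp0sum in
lemma primal_attained {t : ℝ} (ht : 0 ≤ t) :
    sSup (primalSet Ψ c p0 t) ∈ primalSet Ψ c p0 t := by
  have hev : ∀ k j, Continuous fun π : Fin K → Fin K → ℝ => π k j :=
    fun k j => (continuous_apply j).comp (continuous_apply k)
  set F : Set (Fin K → Fin K → ℝ) :=
    {π | (∀ k j, 0 ≤ π k j) ∧ (∀ j, ∑ k, π k j = p0 j) ∧ (∑ k, ∑ j, c k j * π k j ≤ t)}
    with hF
  have hp0le : ∀ j, p0 j ≤ 1 := by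
    intro j
    rw [← hp0sum]
    exact Finset.single_le_sum (fun i _ => hp0 i) (Finset.mem_univ j)
  have hsub : F ⊆ Set.univ.pi fun _ => Set.univ.pi fun _ => Set.Icc (0:ℝ) 1 := by
    rintro π ⟨hpos, hcol, -⟩
    rw [Set.mem_univ_pi]
    intro k
    rw [Set.mem_univ_pi]
    intro j
    refine ⟨hpos k j, ?_⟩
    calc π k j ≤ ∑ i, π i j := Finset.single_le_sum (fun i _ => hpos i j) (Finset.mem_univ k)
      _ = p0 j := hcol j
      _ ≤ 1 := hp0le j
  have hcompQ : IsCompact (Set.univ.pi fun _ : Fin K => Set.univ.pi fun _ : Fin K => Set.Icc (0:ℝ) 1) :=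
    isCompact_univ_pi fun _ => isCompact_univ_pi fun _ => isCompact_Icc
  have hclosed : IsClosed F := by
    have h1 : IsClosed {π : Fin K → Fin K → ℝ | ∀ k j, 0 ≤ π k j} := by
      have : {π : Fin K → Fin K → ℝ | ∀ k j, 0 ≤ π k j}
          = ⋂ k, ⋂ j, {π : Fin K → Fin K → ℝ | 0 ≤ π k j} := by
        ext π; simp [Set.mem_iInter]
      rw [this]
      exact isClosed_iInter fun k => isClosed_iInter fun j =>
        isClosed_le continuous_const (hev k j)
    have h2 : IsClosed {π : Fin K → Fin K → ℝ | ∀ j, ∑ k, π k j = p0 j} := by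
      have : {π : Fin K → Fin K → ℝ | ∀ j, ∑ k, π k j = p0 j}
          = ⋂ j, {π : Fin K → Fin K → ℝ | ∑ k, π k j = p0 j} := by
        ext π; simp [Set.mem_iInter]
      rw [this]
      exact isClosed_iInter fun j =>
        isClosed_eq (continuous_finset_sum _ fun k _ => hev k j) continuous_const
    have h3 : IsClosed {π : Fin K → Fin K → ℝ | ∑ k, ∑ j, c k j * π k j ≤ t} :=
      isClosed_le (continuous_finset_sum _ fun k _ =>
        continuous_finset_sum _ fun j _ => (continuous_const.mul (hev k j))) continuous_const
    have : F = {π : Fin K → Fin K → ℝ | ∀ k j, 0 ≤ π k j}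
        ∩ ({π : Fin K → Fin K → ℝ | ∀ j, ∑ k, π k j = p0 j}
          ∩ {π : Fin K → Fin K → ℝ | ∑ k, ∑ j, c k j * π k j ≤ t}) := by
      ext π; simp [hF, Set.mem_inter_iff, and_assoc]
    rw [this]
    exact h1.inter (h2.inter h3)
  have hFcomp : IsCompact F := hcompQ.of_isClosed_subset hclosed hsub
  have himg : primalSet Ψ c p0 t = (fun π : Fin K → Fin K → ℝ => ∑ k, ∑ j, π k j * Ψ k) '' F := by
    ext v
    constructor
    · rintro ⟨π, h1, h2, h3, h4⟩; exact ⟨π, ⟨h1, h2, h3⟩, h4.symm⟩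
    · rintro ⟨π, ⟨h1, h2, h3⟩, h4⟩; exact ⟨π, h1, h2, h3, h4.symm⟩
  have hcont : Continuous fun π : Fin K → Fin K → ℝ => ∑ k, ∑ j, π k j * Ψ k :=
    continuous_finset_sum _ fun k _ => continuous_finset_sum _ fun j _ => (hev k j).mul continuous_const
  have hPcomp : IsCompact (primalSet Ψ c p0 t) := by
    rw [himg]; exact hFcomp.image hcont
  exact hPcomp.sSup_mem (primal_nonempty Ψ c p0 hcdiag hp0 ht)

include hK hcdiag hp0 hp0sum in
lemma primal_mono {t t' : ℝ} (ht : 0 ≤ t) (htt' : t ≤ t') :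
    sSup (primalSet Ψ c p0 t) ≤ sSup (primalSet Ψ c p0 t') := by
  refine csSup_le_csSup (primal_bddAbove Ψ c p0 hK hp0sum t')
    (primal_nonempty Ψ c p0 hcdiag hp0 ht) ?_
  rintro v ⟨π, h1, h2, h3, h4⟩
  exact ⟨π, h1, h2, h3.trans htt', h4⟩

include hK hcdiag hp0 hp0sum in
lemma primal_concave {t1 t2 a : ℝ} (ht1 : 0 ≤ t1) (ht2 : 0 ≤ t2) (ha : 0 ≤ a) (ha1 : a ≤ 1) :
    a * sSup (primalSet Ψ c p0 t1) + (1 - a) * sSup (primalSet Ψ c p0 t2)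
      ≤ sSup (primalSet Ψ c p0 (a * t1 + (1 - a) * t2)) := by
  have ha2 : 0 ≤ 1 - a := by linarith
  obtain ⟨π1, h1pos, h1col, h1cost, h1val⟩ := primal_attained Ψ c p0 hK hcdiag hp0 hp0sum ht1
  obtain ⟨π2, h2pos, h2col, h2cost, h2val⟩ := primal_attained Ψ c p0 hK hcdiag hp0 hp0sum ht2
  have hmem : a * sSup (primalSet Ψ c p0 t1) + (1 - a) * sSup (primalSet Ψ c p0 t2)
      ∈ primalSet Ψ c p0 (a * t1 + (1 - a) * t2) := by
    refine ⟨fun k j => a * π1 k j + (1 - a) * π2 k j, fun k j => ?_, fun j => ?_, ?_, ?_⟩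
    · exact add_nonneg (mul_nonneg ha (h1pos k j)) (mul_nonneg ha2 (h2pos k j))
    · rw [Finset.sum_add_distrib, ← Finset.mul_sum, ← Finset.mul_sum, h1col j, h2col j]
      ring
    · calc ∑ k, ∑ j, c k j * (a * π1 k j + (1 - a) * π2 k j)
          = a * (∑ k, ∑ j, c k j * π1 k j) + (1 - a) * (∑ k, ∑ j, c k j * π2 k j) := by
            simp only [Finset.mul_sum, Finset.sum_add_distrib, ← Finset.sum_add_distrib]
            congr 1; funext k; congr 1; funext j; ring
        _ ≤ a * t1 + (1 - a) * t2 :=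
            add_le_add (mul_le_mul_of_nonneg_left h1cost ha) (mul_le_mul_of_nonneg_left h2cost ha2)
    · rw [h1val, h2val]
      simp only [Finset.mul_sum, Finset.sum_add_distrib, ← Finset.sum_add_distrib]
      congr 1; funext k; congr 1; funext j; ring
  exact le_csSup (primal_bddAbove Ψ c p0 hK hp0sum _) hmem

include hK hc hcdiag hp0 hp0sum in
/-- A global Lipschitz-type bound: `V t ≤ V 0 + L * t`. -/
lemma exists_L : ∃ L : ℝ, 0 ≤ L ∧ ∀ t : ℝ, 0 ≤ t →
    sSup (primalSet Ψ c p0 t) ≤ sSup (primalSet Ψ c p0 0) + L * t := by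
  refine ⟨∑ k, ∑ j, max 0 (if c k j = 0 then 0 else (Ψ k - Ψ j) / c k j), ?_, ?_⟩
  · exact Finset.sum_nonneg fun k _ => Finset.sum_nonneg fun j _ => le_max_left 0 _
  set L := ∑ k, ∑ j, max 0 (if c k j = 0 then 0 else (Ψ k - Ψ j) / c k j) with hLdef
  have hL0 : 0 ≤ L :=
    Finset.sum_nonneg fun k _ => Finset.sum_nonneg fun j _ => le_max_left 0 _
  have hLkey : ∀ k j, c k j ≠ 0 → Ψ k - Ψ j ≤ L * c k j := by
    intro k j hckj
    have hcpos : 0 < c k j := lt_of_le_of_ne (hc k j) (Ne.symm hckj)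
    have h1 : (Ψ k - Ψ j) / c k j ≤ L := by
      have t1 : (Ψ k - Ψ j) / c k j ≤ max 0 (if c k j = 0 then 0 else (Ψ k - Ψ j) / c k j) := by
        rw [if_neg hckj]; exact le_max_right 0 _
      have t2 : max 0 (if c k j = 0 then 0 else (Ψ k - Ψ j) / c k j)
          ≤ ∑ j', max 0 (if c k j' = 0 then 0 else (Ψ k - Ψ j') / c k j') :=
        Finset.single_le_sum
          (f := fun j' => max (0:ℝ) (if c k j' = 0 then 0 else (Ψ k - Ψ j') / c k j'))
          (fun i _ => le_max_left 0 _) (Finset.mem_univ j)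
      have t3 : ∑ j', max 0 (if c k j' = 0 then 0 else (Ψ k - Ψ j') / c k j') ≤ L :=
        Finset.single_le_sum
          (f := fun k' => ∑ j', max 0 (if c k' j' = 0 then 0 else (Ψ k' - Ψ j') / c k' j'))
          (fun i _ => Finset.sum_nonneg fun j' _ => le_max_left 0 _) (Finset.mem_univ k)
      linarith
    calc Ψ k - Ψ j = (Ψ k - Ψ j) / c k j * c k j := by field_simp
      _ ≤ L * c k j := mul_le_mul_of_nonneg_right h1 hcpos.le
  intro t ht
  obtain ⟨π, hpos, hcol, hcost, hval⟩ := primal_attained Ψ c p0 hK hcdiag hp0 hp0sum ht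
  set m : Fin K → ℝ := fun j => ∑ k, if c k j = 0 then 0 else π k j with hm
  have hmnn : ∀ j, 0 ≤ m j := fun j =>
    Finset.sum_nonneg fun k _ => by split
                                    · exact le_rfl
                                    · exact hpos k j
  set π' : Fin K → Fin K → ℝ :=
    fun k j => (if c k j = 0 then π k j else 0) + (if k = j then m j else 0) with hπ'
  have hmem : (∑ k, ∑ j, π' k j * Ψ k) ∈ primalSet Ψ c p0 0 := by
    refine ⟨π', fun k j => ?_, fun j => ?_, ?_, rfl⟩
    · refine add_nonneg ?_ ?_ <;> split
      · exact hpos k j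
      · exact le_refl 0
      · exact hmnn j
      · exact le_refl 0
    · rw [Finset.sum_add_distrib]
      have e1 : ∑ k, (if k = j then m j else 0) = m j := by
        simp [Finset.sum_ite_eq']
      rw [e1, hm]
      rw [← Finset.sum_add_distrib]
      rw [← hcol j]
      refine Finset.sum_congr rfl fun k _ => ?_
      split <;> ring
    · refine le_of_eq (Finset.sum_eq_zero fun k _ => Finset.sum_eq_zero fun j _ => ?_)
      rcases eq_or_ne (c k j) 0 with hc0 | hc0
      · rw [hc0]; ring
      · have hkj : k ≠ j := fun h => hc0 (h ▸ hcdiag k)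
        simp [hπ', hc0, hkj]
  have hV0 : (∑ k, ∑ j, π' k j * Ψ k) ≤ sSup (primalSet Ψ c p0 0) :=
    le_csSup (primal_bddAbove Ψ c p0 hK hp0sum 0) hmem
  have hdiff : ∑ k, ∑ j, π k j * Ψ k - ∑ k, ∑ j, π' k j * Ψ k ≤ L * t := by
    have step1 : ∑ k, ∑ j, π k j * Ψ k - ∑ k, ∑ j, π' k j * Ψ k
        = ∑ k, ∑ j, (if c k j = 0 then 0 else π k j * (Ψ k - Ψ j)) := by
      have e3 : ∑ k, ∑ j, (if k = j then m j * Ψ k else 0) = ∑ j, m j * Ψ j := by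
        rw [Finset.sum_comm]
        refine Finset.sum_congr rfl fun j _ => ?_
        simp [Finset.sum_ite_eq']
      have e2 : ∑ k, ∑ j, π' k j * Ψ k
          = (∑ k, ∑ j, (if c k j = 0 then π k j * Ψ k else 0)) + ∑ j, m j * Ψ j := by
        have e2a : ∑ k, ∑ j, π' k j * Ψ k
            = ∑ k, ((∑ j, (if c k j = 0 then π k j * Ψ k else 0))
              + ∑ j, (if k = j then m j * Ψ k else 0)) := by
          refine Finset.sum_congr rfl fun k _ => ?_
          rw [← Finset.sum_add_distrib]
          refine Finset.sum_congr rfl fun j _ => ?_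
          simp only [hπ', add_mul]
          congr 1 <;> split <;> ring
        rw [e2a, Finset.sum_add_distrib, e3]
      have e4 : ∑ j, m j * Ψ j = ∑ k, ∑ j, (if c k j = 0 then 0 else π k j * Ψ j) := by
        rw [Finset.sum_comm]
        refine Finset.sum_congr rfl fun j _ => ?_
        rw [hm, Finset.sum_mul]
        refine Finset.sum_congr rfl fun k _ => ?_
        split <;> ring
      rw [e2, e4, sub_add_eq_sub_sub, ← Finset.sum_sub_distrib, ← Finset.sum_sub_distrib]
      refine Finset.sum_congr rfl fun k _ => ?_
      rw [← Finset.sum_sub_distrib, ← Finset.sum_sub_distrib]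
      refine Finset.sum_congr rfl fun j _ => ?_
      rcases eq_or_ne (c k j) 0 with h | h <;> simp [h] <;> ring
    rw [step1]
    have step2 : ∑ k, ∑ j, (if c k j = 0 then 0 else π k j * (Ψ k - Ψ j))
        ≤ ∑ k, ∑ j, L * (c k j * π k j) := by
      refine Finset.sum_le_sum fun k _ => Finset.sum_le_sum fun j _ => ?_
      split
      · rename_i hc0
        rw [hc0]; simp
      · rename_i hc0
        calc π k j * (Ψ k - Ψ j) ≤ π k j * (L * c k j) :=
              mul_le_mul_of_nonneg_left (hLkey k j hc0) (hpos k j)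
          _ = L * (c k j * π k j) := by ring
    refine step2.trans ?_
    calc ∑ k, ∑ j, L * (c k j * π k j) = L * ∑ k, ∑ j, c k j * π k j := by
          rw [Finset.mul_sum]
          exact Finset.sum_congr rfl fun k _ => (Finset.mul_sum _ _ _).symm
      _ ≤ L * t := mul_le_mul_of_nonneg_left hcost hL0
  have : sSup (primalSet Ψ c p0 t) = ∑ k, ∑ j, π k j * Ψ k := hval
  linarith

include hK hc hcdiag hp0 hp0sum in
/-- Existence of a supergradient of the value function at `θ`. -/
lemma exists_supergradient {θ : ℝ} (hθ : 0 ≤ θ) :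
    ∃ lam : ℝ, 0 ≤ lam ∧ ∀ t : ℝ, 0 ≤ t →
      sSup (primalSet Ψ c p0 t) ≤ sSup (primalSet Ψ c p0 θ) + lam * (t - θ) := by
  rcases eq_or_lt_of_le hθ with hθ0 | hθpos
  · obtain ⟨L, hL0, hL⟩ := exists_L Ψ c p0 hK hc hcdiag hp0 hp0sum
    refine ⟨L, hL0, fun t ht => ?_⟩
    have := hL t ht
    rw [← hθ0]
    simpa using this
  · set V : ℝ → ℝ := fun t => sSup (primalSet Ψ c p0 t) with hV
    have key : ∀ t s : ℝ, 0 ≤ t → t < θ → θ < s →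
        (V s - V θ) * (θ - t) ≤ (V θ - V t) * (s - θ) := by
      intro t s ht htθ hθs
      have hst : (0:ℝ) < s - t := by linarith
      have ha : 0 ≤ (θ - t) / (s - t) := div_nonneg (by linarith) hst.le
      have ha1 : (θ - t) / (s - t) ≤ 1 := by
        rw [div_le_one hst]; linarith
      have hcc := primal_concave Ψ c p0 hK hcdiag hp0 hp0sum (t1 := s) (t2 := t)
        (a := (θ - t)/(s - t)) (by linarith) ht ha ha1
      have harg : (θ - t)/(s - t) * s + (1 - (θ - t)/(s - t)) * t = θ := by
        field_simp
        ring
      rw [harg] at hcc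
      have hmul := mul_le_mul_of_nonneg_right hcc hst.le
      have hae : (θ - t)/(s - t) * (s - t) = θ - t := div_mul_cancel₀ _ (ne_of_gt hst)
      have expand : ((θ - t)/(s - t) * V s + (1 - (θ - t)/(s - t)) * V t) * (s - t)
          = ((θ - t)/(s - t) * (s - t)) * V s
            + ((s - t) - ((θ - t)/(s - t) * (s - t))) * V t := by ring
      rw [expand, hae] at hmul
      linarith [hmul]
    have VmonoA : ∀ t, 0 ≤ t → t ≤ θ → V t ≤ V θ := fun t ht htθ =>
      primal_mono Ψ c p0 hK hcdiag hp0 hp0sum ht htθ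
    set A : Set ℝ := {r | ∃ s, θ < s ∧ r = (V s - V θ) / (s - θ)} with hA
    have hAne : A.Nonempty := ⟨(V (θ+1) - V θ) / (θ + 1 - θ), θ + 1, by linarith, rfl⟩
    have hAbdd : BddAbove A := by
      refine ⟨(V θ - V 0) / θ, ?_⟩
      rintro r ⟨s, hs, rfl⟩
      rw [div_le_div_iff₀ (by linarith) hθpos]
      have := key 0 s le_rfl hθpos hs
      linarith
    refine ⟨max (sSup A) 0, le_max_right _ _, fun t ht => ?_⟩
    rcases lt_trichotomy t θ with hlt | heq | hgt
    · have hslope : max (sSup A) 0 ≤ (V θ - V t) / (θ - t) := by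
        refine max_le ?_ ?_
        · refine csSup_le hAne ?_
          rintro r ⟨s, hs, rfl⟩
          rw [div_le_div_iff₀ (by linarith) (by linarith)]
          exact key t s ht hlt hs
        · exact div_nonneg (by linarith [VmonoA t ht hlt.le]) (by linarith)
      rw [le_div_iff₀ (by linarith)] at hslope
      linarith [hslope]
    · rw [heq]; simp
    · have hmem : (V t - V θ) / (t - θ) ∈ A := ⟨t, hgt, rfl⟩
      have h1 : (V t - V θ) / (t - θ) ≤ max (sSup A) 0 :=
        (le_csSup hAbdd hmem).trans (le_max_left _ _)
      rw [div_le_iff₀ (by linarith)] at h1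
      linarith

end Aux

/-- Strong LP duality for the inner Wasserstein DRO problem on a finite sample space. -/
theorem wasserstein_dro_strong_duality (K : ℕ) (hK : 0 < K)
    (Ψ : Fin K → ℝ) (c : Fin K → Fin K → ℝ)
    (hc : ∀ k j, 0 ≤ c k j) (hcdiag : ∀ k, c k k = 0)
    (p0 : Fin K → ℝ) (hp0 : ∀ j, 0 ≤ p0 j) (hp0sum : ∑ j, p0 j = 1)
    (θ : ℝ) (hθ : 0 ≤ θ) :
    sSup {v : ℝ | ∃ π : Fin K → Fin K → ℝ,
        (∀ k j, 0 ≤ π k j) ∧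
        (∀ j, ∑ k, π k j = p0 j) ∧
        (∑ k, ∑ j, c k j * π k j ≤ θ) ∧
        v = ∑ k, ∑ j, π k j * Ψ k} =
    sInf {v : ℝ | ∃ (lam : ℝ) (h : Fin K → ℝ),
        0 ≤ lam ∧
        (∀ j k, Ψ k - lam * c k j ≤ h j) ∧
        v = lam * θ + ∑ j, p0 j * h j} := by
  have hneK : Nonempty (Fin K) := ⟨⟨0, hK⟩⟩
  set D : Set ℝ := {v : ℝ | ∃ (lam : ℝ) (h : Fin K → ℝ),
      0 ≤ lam ∧
      (∀ j k, Ψ k - lam * c k j ≤ h j) ∧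
      v = lam * θ + ∑ j, p0 j * h j} with hD
  show sSup (primalSet Ψ c p0 θ) = sInf D
  have Pne := primal_nonempty Ψ c p0 hcdiag hp0 hθ
  have Pbdd := primal_bddAbove Ψ c p0 hK hp0sum θ
  have weak : ∀ v ∈ primalSet Ψ c p0 θ, ∀ w ∈ D, v ≤ w := by
    rintro v ⟨π, hpos, hcol, hcost, rfl⟩ w ⟨lam, h, hlam, hfeas, rfl⟩
    have e1 : ∑ k, ∑ j, π k j * (h j + lam * c k j)
        = (∑ j, p0 j * h j) + lam * (∑ k, ∑ j, c k j * π k j) := by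
      calc ∑ k, ∑ j, π k j * (h j + lam * c k j)
          = ∑ k, ((∑ j, π k j * h j) + ∑ j, lam * (c k j * π k j)) := by
            refine Finset.sum_congr rfl fun k _ => ?_
            rw [← Finset.sum_add_distrib]
            exact Finset.sum_congr rfl fun j _ => by ring
        _ = (∑ k, ∑ j, π k j * h j) + ∑ k, ∑ j, lam * (c k j * π k j) :=
            Finset.sum_add_distrib
        _ = (∑ j, p0 j * h j) + lam * (∑ k, ∑ j, c k j * π k j) := by
            congr 1
            · rw [Finset.sum_comm]
              refine Finset.sum_congr rfl fun j _ => ?_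
              rw [← Finset.sum_mul, hcol j, mul_comm]
            · rw [Finset.mul_sum]
              exact Finset.sum_congr rfl fun k _ => (Finset.mul_sum _ _ _).symm
    calc ∑ k, ∑ j, π k j * Ψ k
        ≤ ∑ k, ∑ j, π k j * (h j + lam * c k j) := by
          refine Finset.sum_le_sum fun k _ => Finset.sum_le_sum fun j _ => ?_
          exact mul_le_mul_of_nonneg_left (by linarith [hfeas j k]) (hpos k j)
      _ = (∑ j, p0 j * h j) + lam * (∑ k, ∑ j, c k j * π k j) := e1
      _ ≤ (∑ j, p0 j * h j) + lam * θ :=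
          add_le_add le_rfl (mul_le_mul_of_nonneg_left hcost hlam)
      _ = lam * θ + ∑ j, p0 j * h j := by ring
  have Dne : D.Nonempty := by
    refine ⟨0 * θ + ∑ j, p0 j * Finset.univ.sup' Finset.univ_nonempty Ψ,
      0, fun _ => Finset.univ.sup' Finset.univ_nonempty Ψ, le_rfl, fun j k => ?_, rfl⟩
    simp only [zero_mul, sub_zero]
    exact Finset.le_sup' Ψ (Finset.mem_univ k)
  have le1 : sSup (primalSet Ψ c p0 θ) ≤ sInf D :=
    le_csInf Dne fun w hw => csSup_le Pne fun v hv => weak v hv w hw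
  obtain ⟨lam, hlam, hsg⟩ := exists_supergradient Ψ c p0 hK hc hcdiag hp0 hp0sum hθ
  have hσ : ∀ j : Fin K, ∃ k0 : Fin K, ∀ k, Ψ k - lam * c k j ≤ Ψ k0 - lam * c k0 j := by
    intro j
    obtain ⟨k0, -, hk0⟩ := Finset.exists_max_image Finset.univ
      (fun k => Ψ k - lam * c k j) ⟨⟨0, hK⟩, Finset.mem_univ _⟩
    exact ⟨k0, fun k => hk0 k (Finset.mem_univ k)⟩
  choose σ hσmax using hσ
  set t0 : ℝ := ∑ j, p0 j * c (σ j) j with ht0def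
  have ht0 : 0 ≤ t0 := Finset.sum_nonneg fun j _ => mul_nonneg (hp0 j) (hc _ _)
  have hVt0 : (∑ j, p0 j * Ψ (σ j)) ≤ sSup (primalSet Ψ c p0 t0) :=
    le_csSup (primal_bddAbove Ψ c p0 hK hp0sum t0) (selection_mem Ψ c p0 hp0 σ le_rfl)
  have hsg0 := hsg t0 ht0
  have hdual_mem : (lam * θ + ∑ j, p0 j * (Ψ (σ j) - lam * c (σ j) j)) ∈ D :=
    ⟨lam, fun j => Ψ (σ j) - lam * c (σ j) j, hlam,
      fun j k => hσmax j k, rfl⟩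
  obtain ⟨v0, hv0⟩ := Pne
  have hDbdd : BddBelow D := ⟨v0, fun w hw => weak v0 hv0 w hw⟩
  have le2 : sInf D ≤ sSup (primalSet Ψ c p0 θ) := by
    refine (csInf_le hDbdd hdual_mem).trans ?_
    have esplit : ∑ j, p0 j * (Ψ (σ j) - lam * c (σ j) j)
        = (∑ j, p0 j * Ψ (σ j)) - lam * t0 := by
      calc ∑ j, p0 j * (Ψ (σ j) - lam * c (σ j) j)
          = ∑ j, (p0 j * Ψ (σ j) - lam * (p0 j * c (σ j) j)) :=
            Finset.sum_congr rfl fun j _ => by ring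
        _ = (∑ j, p0 j * Ψ (σ j)) - lam * ∑ j, p0 j * c (σ j) j := by
            rw [Finset.sum_sub_distrib, Finset.mul_sum]
    rw [esplit]
    linarith [hsg0, hVt0]
  exact le_antisymm le1 le2
end
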